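/- arXiv:1304.3687 — 2 statements merged into one kernel-verified Lean document; each statement's English description precedes it below -/
import Mathlib

section
/- Let R = ℂ[x,x⁻¹,y,y⁻¹], let B ⊆ R be the ℂ-subspace spanned by the monomials xⁱyʲ with i ≥ 0 and j ∈ ℤ, and let n be an odd natural number. Consider V′ = x⁻ⁿB/xB with the ℂ-bilinear pairing β′ : V′ × V′ → R/B induced by (f,g) ↦ x^{n−1}y⁻¹fg (well defined since x^{n−1}y⁻¹·(xB)·(x⁻ⁿB) ⊆ B). Then N = x^{−(n−1)/2}B/xB satisfies β′(u,v) = 0 for all u,v ∈ N, and N = {v ∈ V′ : β′(v,u) = 0 for all u ∈ N}; that is, N is a Lagrangian. (This shows the form representing L⁰(⟨xy⟩) restricted to the chart U_{σ₃} has trivial Witt class when n is odd.) -/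
/-! Every lattice in sight is `x^c B`, the span of the monomials of `x`-degree at least `c`, and
multiplying by a monomial `x^a y^b` shifts `x`-degrees by `a`, so `x^a y^b f ∈ x^c B ↔ f ∈ x^{c-a} B`.
For `n = 2k + 1` the factor `x^{n-1}y⁻¹` has `x`-degree `2k`, so `β'` sends `x^{-k}B × x^{-k}B` into
`B`. Conversely, pairing `v` with the generator `x^{-k}` of `N` gives `x^k y⁻¹ v ∈ B`, that is,
`v ∈ x^{-k}B`. -/

noncomputable section

/-- The Laurent polynomial ring `ℂ[x,x⁻¹,y,y⁻¹]` as the monoid algebra of `ℤ × ℤ` over `ℂ`. -/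
abbrev LaurentR : Type := AddMonoidAlgebra ℂ (ℤ × ℤ)

/-- The monomial `xⁱyʲ`. -/
def mono (i j : ℤ) : LaurentR := AddMonoidAlgebra.single (i, j) 1

/-- `x` -/
def xx : LaurentR := mono 1 0
/-- `x⁻¹` -/
def xxInv : LaurentR := mono (-1) 0
/-- `y` -/
def yy : LaurentR := mono 0 1
/-- `y⁻¹` -/
def yyInv : LaurentR := mono 0 (-1)

/-- `A = ℂ[x,y]`, the ℂ-subspace spanned by monomials `xⁱyʲ` with `i ≥ 0`, `j ≥ 0`. -/
def Asub : Submodule ℂ LaurentR := Submodule.span ℂ {r | ∃ (i : ℕ) (j : ℕ), r = mono i j}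
/-- `B = ℂ[x,y,y⁻¹]`, the ℂ-subspace spanned by monomials `xⁱyʲ` with `i ≥ 0`, `j ∈ ℤ`. -/
def Bsub : Submodule ℂ LaurentR := Submodule.span ℂ {r | ∃ (i : ℕ) (j : ℤ), r = mono i j}
/-- `C = ℂ[x,x⁻¹,y]`, the ℂ-subspace spanned by monomials `xⁱyʲ` with `i ∈ ℤ`, `j ≥ 0`. -/
def Csub : Submodule ℂ LaurentR := Submodule.span ℂ {r | ∃ (i : ℤ) (j : ℕ), r = mono i j}
/-- `ℂ[y,y⁻¹]`, the ℂ-subspace spanned by the monomials `yʲ`, `j ∈ ℤ`. -/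
def Dy : Submodule ℂ LaurentR := Submodule.span ℂ {r | ∃ (j : ℤ), r = mono 0 j}
/-- `ℂ[x,x⁻¹]`, the ℂ-subspace spanned by the monomials `xⁱ`, `i ∈ ℤ`. -/
def Dx : Submodule ℂ LaurentR := Submodule.span ℂ {r | ∃ (i : ℤ), r = mono i 0}

/-- `u·L = {u·f : f ∈ L}` as a `ℂ`-submodule of `LaurentR`. -/
def dil (u : LaurentR) (L : Submodule ℂ LaurentR) : Submodule ℂ LaurentR :=
  L.map (LinearMap.mulLeft ℂ u)


lemma mono_mul (i j k l : ℤ) : mono i j * mono k l = mono (i + k) (j + l) := by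
  simp [mono, AddMonoidAlgebra.single_mul_single]

lemma mono_pow (i j : ℤ) (k : ℕ) : mono i j ^ k = mono (k * i) (k * j) := by
  simp [mono, AddMonoidAlgebra.single_pow]

lemma mono_zero_zero : mono 0 0 = 1 := rfl

def xDegGE (c : ℤ) : Submodule ℂ LaurentR :=
  AddMonoidAlgebra.supported ℂ ℂ {p : ℤ × ℤ | c ≤ p.1}

lemma xDegGE_antitone {c d : ℤ} (h : c ≤ d) : xDegGE d ≤ xDegGE c :=
  AddMonoidAlgebra.supported_mono fun _ hp => h.trans hp

lemma mono_mem_xDegGE {a b c : ℤ} (h : c ≤ a) : mono a b ∈ xDegGE c := by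
  rw [xDegGE, AddMonoidAlgebra.mem_supported]
  intro p hp
  rw [Finset.mem_coe, mono, AddMonoidAlgebra.coeff_single, Finsupp.mem_support_single] at hp
  rw [hp.1]
  exact h

lemma mul_mem_xDegGE {c d : ℤ} {f g : LaurentR} (hf : f ∈ xDegGE c) (hg : g ∈ xDegGE d) :
    f * g ∈ xDegGE (c + d) := by
  classical
  rw [xDegGE, AddMonoidAlgebra.mem_supported] at *
  intro p hp
  obtain ⟨q, hq, r, hr, rfl⟩ := Finset.mem_add.mp (AddMonoidAlgebra.support_coeff_mul_subset f g hp)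
  show c + d ≤ q.1 + r.1
  exact add_le_add (hf hq) (hg hr)

lemma mono_mul_mem_xDegGE_iff {a b c : ℤ} {v : LaurentR} :
    mono a b * v ∈ xDegGE c ↔ v ∈ xDegGE (c - a) := by
  refine ⟨fun h => ?_, fun h => ?_⟩
  · have h' := mul_mem_xDegGE (mono_mem_xDegGE (a := -a) (b := -b) le_rfl) h
    rwa [← mul_assoc, mono_mul, neg_add_cancel, neg_add_cancel, mono_zero_zero, one_mul,
      neg_add_eq_sub] at h'
  · have h' := mul_mem_xDegGE (mono_mem_xDegGE (a := a) (b := b) le_rfl) h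
    rwa [add_sub_cancel] at h'

lemma Bsub_eq_xDegGE_zero : Bsub = xDegGE 0 := by
  rw [Bsub, xDegGE, AddMonoidAlgebra.supported_eq_span_single]
  congr 1
  ext r
  constructor
  · rintro ⟨i, j, rfl⟩
    exact ⟨(i, j), Int.natCast_nonneg i, rfl⟩
  · rintro ⟨⟨i, j⟩, hi, rfl⟩
    exact ⟨i.toNat, j, by rw [Int.toNat_of_nonneg hi]; rfl⟩

lemma dil_mono_Bsub (a b : ℤ) : dil (mono a b) Bsub = xDegGE a := by
  ext v
  rw [dil, Submodule.mem_map, Bsub_eq_xDegGE_zero]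
  constructor
  · rintro ⟨w, hw, rfl⟩
    exact mono_mul_mem_xDegGE_iff.mpr (by rwa [sub_self])
  · intro hv
    refine ⟨mono (-a) (-b) * v, by rwa [mono_mul_mem_xDegGE_iff, sub_neg_eq_add, zero_add], ?_⟩
    rw [LinearMap.mulLeft_apply, ← mul_assoc, mono_mul, add_neg_cancel, add_neg_cancel,
      mono_zero_zero, one_mul]

lemma dil_xxInv_pow_Bsub (k : ℕ) : dil (xxInv ^ k) Bsub = xDegGE (-k) := by
  rw [xxInv, mono_pow, dil_mono_Bsub, mul_neg_one]

/-- For `n` odd, the submodule `N = x^{-(n-1)/2}B/xB` of `V' = x⁻ⁿB/xB` is a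
Lagrangian for the pairing `β'` induced by `(f,g) ↦ x^{n-1}y⁻¹fg` with values in `R/B`:
`β'` vanishes on `N × N`, and `N` equals its own orthogonal complement in `V'`.
(Stated at the level of lattices in `R`; `x^{n-1}` is written `xⁿ·x⁻¹`, and membership in `B`
expresses vanishing in `R/B`.) -/
theorem stmt_6 (n : ℕ) (hn : Odd n) :
    (∀ u ∈ dil (xxInv ^ ((n - 1) / 2)) Bsub, ∀ v ∈ dil (xxInv ^ ((n - 1) / 2)) Bsub,
        xx ^ n * xxInv * yyInv * (u * v) ∈ Bsub) ∧
    {v : LaurentR | v ∈ dil (xxInv ^ n) Bsub ∧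
        ∀ u ∈ dil (xxInv ^ ((n - 1) / 2)) Bsub, xx ^ n * xxInv * yyInv * (v * u) ∈ Bsub}
      = (dil (xxInv ^ ((n - 1) / 2)) Bsub : Set LaurentR) := by
  obtain ⟨k, rfl⟩ := hn
  have hk : (2 * k + 1 - 1) / 2 = k := by omega
  have hβ : xx ^ (2 * k + 1) * xxInv * yyInv = mono (2 * k) (-1) := by
    rw [xx, xxInv, yyInv, mono_pow, mono_mul, mono_mul]; congr 1; push_cast; ring
  rw [hk, hβ, dil_xxInv_pow_Bsub, dil_xxInv_pow_Bsub, Bsub_eq_xDegGE_zero]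
  have isotropic : ∀ u ∈ xDegGE (-k), ∀ v ∈ xDegGE (-k), mono (2 * k) (-1) * (u * v) ∈ xDegGE 0 :=
    fun u hu v hv => by
      rw [mono_mul_mem_xDegGE_iff]; convert mul_mem_xDegGE hu hv using 2; ring
  refine ⟨isotropic, Set.ext fun v => ⟨fun ⟨_, horth⟩ => ?_, fun hv => ⟨?_, isotropic v hv⟩⟩⟩
  · have := horth (mono (-k) 0) (mono_mem_xDegGE le_rfl)
    rwa [mul_comm v, ← mul_assoc, mono_mul, mono_mul_mem_xDegGE_iff,
      show (0 : ℤ) - (2 * k + -k) = -k by ring] at this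
  · exact xDegGE_antitone (by omega) hv
end
end

section
/- Let R = ℂ[x,x⁻¹,y,y⁻¹]. Let A, B, C ⊆ R be the ℂ-subspaces spanned by the monomials xⁱyʲ with, respectively: i ≥ 0 and j ≥ 0 (A = ℂ[x,y]); i ≥ 0 and j ∈ ℤ (B = ℂ[x,y,y⁻¹]); i ∈ ℤ and j ≥ 0 (C = ℂ[x,x⁻¹,y]). Then for every natural number m, {f ∈ y⁻¹C : xᵐ·f·A ⊆ B + C} = x⁻ᵐy⁻¹A + C. (For m = 0 this is the self-duality of the lattice (y⁻¹A + C)/C for ⟨1_x⟩ on the chart U_{σ₁}; for m = 1 and m = n it computes the dual lattices arising in the ⟨x⟩ and ⟨1_x⟩ computations for d¹ on the charts U_{σ₁} and U_{σ₄}.) -/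
noncomputable section

/-!
Each of `A`, `B`, `C` is the space of Laurent polynomials supported on a set of exponents, and
multiplication by a monomial translates supports, so everything reduces to subsets of `ℤ²`.
For `U` supported on `s`, `f · A ⊆ U` says exactly that `supp f + ℕ² ⊆ s`. The exponent set
`{i ≥ -m} ∪ {j ≥ 0}` of `x⁻ᵐ(B + C)` is stable under adding `ℕ²`, so testing against `g = 1`
suffices; together with `j ≥ -1` from `f ∈ y⁻¹C` this leaves `{j ≥ 0} ∪ {j = -1, i ≥ -m}`,
the exponent set of `x⁻ᵐy⁻¹A + C`.
-/

open AddMonoidAlgebra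

namespace AddMonoidAlgebra

variable {k G : Type*}

lemma supported_union [Semiring k] (s t : Set G) :
    supported k k (s ∪ t) = supported k k s ⊔ supported k k t := by
  simp only [supported_eq_map, Finsupp.supported_union, Submodule.map_sup]

lemma supported_inter [Semiring k] (s t : Set G) :
    supported k k (s ∩ t) = supported k k s ⊓ supported k k t := by
  ext f
  simp only [Submodule.mem_inf, mem_supported, Set.subset_inter_iff]

lemma single_mem_supported [Semiring k] {a : G} {s : Set G} (r : k) (ha : a ∈ s) :
    single a r ∈ supported k k s :=
  Finsupp.single_mem_supported k r ha

lemma single_one_mul_mem_supported_iff [Semiring k] [AddGroup G] {a : G} {f : k[G]}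
    {s : Set G} : single a 1 * f ∈ supported k k s ↔ f ∈ supported k k ((a + ·) ⁻¹' s) := by
  simp only [mem_supported', coeff_single_mul_apply, one_mul, Set.mem_preimage]
  refine ⟨fun h q hq => by simpa using h (a + q) hq, fun h q hq => h _ ?_⟩
  simpa using hq

lemma forall_mul_mem_supported_iff [Semiring k] [AddGroup G] {f : k[G]} {t u : Set G} :
    (∀ g ∈ supported k k t, f * g ∈ supported k k u) ↔
      f ∈ supported k k {p | ∀ q ∈ t, p + q ∈ u} := by
  classical
  constructor
  · intro h p hp q hq
    refine h _ (single_mem_supported 1 hq) (Finsupp.mem_support_iff.2 ?_)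
    simpa [coeff_mul_single_apply] using Finsupp.mem_support_iff.1 hp
  · intro hf g hg p hp
    obtain ⟨a, ha, b, hb, rfl⟩ := Finset.mem_add.1 (support_coeff_mul_subset f g hp)
    exact hf ha b (hg hb)

end AddMonoidAlgebra

lemma dil_single_supported (a : ℤ × ℤ) (s : Set (ℤ × ℤ)) :
    dil (single a 1) (supported ℂ ℂ s) = supported ℂ ℂ ((-a + ·) ⁻¹' s) := by
  ext f
  constructor
  · rintro ⟨g, hg, rfl⟩
    rw [LinearMap.mulLeft_apply, single_one_mul_mem_supported_iff]
    simpa [Set.preimage_preimage] using hg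
  · intro hf
    refine ⟨single (-a) 1 * f, ?_, ?_⟩
    · rw [SetLike.mem_coe, single_one_mul_mem_supported_iff]
      exact hf
    · rw [LinearMap.mulLeft_apply, ← mul_assoc, single_mul_single, add_neg_cancel, one_mul,
        ← one_def, one_mul]

lemma Asub_eq : Asub = supported ℂ ℂ {p : ℤ × ℤ | 0 ≤ p.1 ∧ 0 ≤ p.2} := by
  rw [Asub, supported_eq_span_single]
  congr 1
  ext r
  constructor
  · rintro ⟨i, j, rfl⟩
    exact ⟨(i, j), ⟨Int.natCast_nonneg _, Int.natCast_nonneg _⟩, rfl⟩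
  · rintro ⟨⟨i, j⟩, ⟨hi, hj⟩, rfl⟩
    lift i to ℕ using hi
    lift j to ℕ using hj
    exact ⟨i, j, rfl⟩

lemma Bsub_eq : Bsub = supported ℂ ℂ {p : ℤ × ℤ | 0 ≤ p.1} := by
  rw [Bsub, supported_eq_span_single]
  congr 1
  ext r
  constructor
  · rintro ⟨i, j, rfl⟩
    exact ⟨(i, j), Int.natCast_nonneg _, rfl⟩
  · rintro ⟨⟨i, j⟩, hi, rfl⟩
    lift i to ℕ using hi
    exact ⟨i, j, rfl⟩

lemma Csub_eq : Csub = supported ℂ ℂ {p : ℤ × ℤ | 0 ≤ p.2} := by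
  rw [Csub, supported_eq_span_single]
  congr 1
  ext r
  constructor
  · rintro ⟨i, j, rfl⟩
    exact ⟨(i, j), Int.natCast_nonneg _, rfl⟩
  · rintro ⟨⟨i, j⟩, hj, rfl⟩
    lift j to ℕ using hj
    exact ⟨i, j, rfl⟩

lemma xx_pow (m : ℕ) : xx ^ m = single ((m : ℤ), 0) 1 := by
  simp [xx, mono, single_pow]

lemma xxInv_pow_mul_yyInv (m : ℕ) : xxInv ^ m * yyInv = single (-(m : ℤ), -1) 1 := by
  simp [xxInv, yyInv, mono, single_pow, single_mul_single]

lemma yyInv_eq : yyInv = single (0, -1) 1 := rfl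

/-- For every `m : ℕ`,
`{f ∈ y⁻¹C : xᵐ·f·A ⊆ B + C} = x⁻ᵐy⁻¹A + C`. -/
theorem stmt_8 (m : ℕ) :
    {f : LaurentR | f ∈ dil yyInv Csub ∧ ∀ g ∈ Asub, xx ^ m * (f * g) ∈ Bsub ⊔ Csub}
      = ((dil (xxInv ^ m * yyInv) Asub ⊔ Csub : Submodule ℂ LaurentR) : Set LaurentR) := by
  rw [xx_pow, xxInv_pow_mul_yyInv, yyInv_eq, Asub_eq, Bsub_eq, Csub_eq, dil_single_supported,
    dil_single_supported, ← supported_union, ← supported_union]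
  ext f
  simp only [Set.mem_ofPred_eq, SetLike.mem_coe, single_one_mul_mem_supported_iff,
    forall_mul_mem_supported_iff, ← Submodule.mem_inf, ← supported_inter]
  congr! 2
  ext ⟨i, j⟩
  simp only [Set.mem_inter_iff, Set.mem_preimage, Set.mem_union, Set.mem_ofPred_eq, Prod.forall,
    Prod.mk_add_mk, Prod.neg_mk, neg_neg, neg_zero, zero_add]
  constructor
  · rintro ⟨hj, h⟩
    have h_one := h 0 0 ⟨le_rfl, le_rfl⟩
    omega
  · intro h
    exact ⟨by omega, fun a b hab => by omega⟩
end
end
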